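/- arXiv:2301.05385 — 3 statements merged into one kernel-verified Lean document; each statement's English description precedes it below -/
import Mathlib

section
/- Let S_1,...,S_n be i.i.d. continuous random variables with cdf F satisfying ∫_0^x F^{k-1}(y) dF(y) = F^k(x)/k for all integers k ≥ 1 and x > 0. Let v_1 < ... < v_k be vertices with domination neighbourhoods D(v_l) satisfying the weak-nested property: v_k ∉ C(v_k) and v_l ∈ D(v_{l+1}) \ C(v_l) for 1 ≤ l ≤ k-1, where C(v_l) = ∪_{j≤l} D(v_j) and c(v_l) = 1 + #C(v_l). Then the probability that every v_l is a weighted dominating vertex equals ∏_{l=1}^k 1/c(v_l). -/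
/-!
Push the weights forward to the product measure `μ^n`, `μ` the common law, and write
`C l = ⋃_{j ≤ l} D (v j)`. Since the weights of `v` increase along the chain, the event is that
`y (v l) > y u` for all `u ∈ C l` and all `l`. Let `E_l` be this event for the levels up to `l`;
it only involves the coordinates in `insert (v l) (C l) ⊆ C (l + 1)`. Integrating out
`y (v (l + 1)) = u` last, the remaining coordinates of `C (l + 1)` are independent of `E_l` and
each falls below `u` with probability `G u = μ (-∞, u)`. With `c l = #C l + 1`, induction on `l`
gives `μ^n (E_l ∩ {y (v l) < t}) = G t ^ c l * ∏_{j ≤ l} 1 / c j`, each step being the identity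
`∫_{u < t} G u ^ (c - 1) dμ = G t ^ c / c`; letting `t → ∞` gives the product.
-/

open MeasureTheory ProbabilityTheory Set Function Filter Topology
open scoped ENNReal Finset

theorem DependsOn.apply_update {ι β : Type*} {α : ι → Type*} [DecidableEq ι]
    {f : (∀ i, α i) → β} {s : Set ι} (hf : DependsOn f s) {i : ι} (hi : i ∉ s)
    (y : ∀ i, α i) (a : α i) :
    f (Function.update y i a) = f y :=
  hf fun _ hj => update_of_ne (ne_of_mem_of_not_mem hj hi) _ _

namespace MeasureTheory.Measure

variable {ι : Type*} [Fintype ι] [DecidableEq ι] {X : ι → Type*}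
  [∀ i, MeasurableSpace (X i)] (μ : ∀ i, Measure (X i)) [∀ i, IsProbabilityMeasure (μ i)]

theorem measurePreserving_update (i : ι) :
    MeasurePreserving (fun p : (∀ j, X j) × X i => update p.1 i p.2)
      ((Measure.pi μ).prod (μ i)) (Measure.pi μ) := by
  refine ⟨by fun_prop, (Measure.pi_eq fun s hs => ?_).symm⟩
  have hpre : (fun p : (∀ j, X j) × X i => update p.1 i p.2) ⁻¹' univ.pi s
      = univ.pi (update s i univ) ×ˢ s i := by
    ext ⟨y, t⟩
    simp only [mem_preimage, mem_univ_pi, mem_prod]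
    refine ⟨fun h => ⟨fun j => ?_, by simpa using h i⟩, fun ⟨hy, ht⟩ j => ?_⟩
    · rcases eq_or_ne j i with rfl | hj
      · simp
      · simpa [hj] using h j
    · rcases eq_or_ne j i with rfl | hj
      · simpa using ht
      · simpa [hj] using hy j
  rw [map_apply (by fun_prop) (.univ_pi hs), hpre, prod_prod, pi_pi,
    ← Finset.prod_erase_mul _ _ (Finset.mem_univ i),
    ← Finset.prod_erase_mul _ _ (Finset.mem_univ i)]
  simp only [update_self, measure_univ, mul_one]
  exact congrArg (· * _) <| Finset.prod_congr rfl fun j hj => by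
    rw [update_of_ne (Finset.ne_of_mem_erase hj)]

theorem pi_eq_lintegral_update (i : ι) {A : Set (∀ j, X j)} (hA : MeasurableSet A) :
    Measure.pi μ A = ∫⁻ t, Measure.pi μ {y | update y i t ∈ A} ∂(μ i) := by
  rw [← (measurePreserving_update μ i).measure_preimage hA.nullMeasurableSet,
    prod_apply_symm (measurable_update' hA)]
  rfl

theorem pi_inter_eval_preimage {i : ι} {A : Set (∀ j, X j)} (hA : MeasurableSet A)
    (hAi : DependsOn (· ∈ A) {i}ᶜ) {B : Set (X i)} (hB : MeasurableSet B) :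
    Measure.pi μ (A ∩ eval i ⁻¹' B) = Measure.pi μ A * μ i B := by
  have hpre :
      (fun p : (∀ j, X j) × X i => update p.1 i p.2) ⁻¹' (A ∩ eval i ⁻¹' B) = A ×ˢ B := by
    ext ⟨y, t⟩
    have : update y i t ∈ A ↔ y ∈ A := propext_iff.mp (hAi.apply_update (by simp) y t)
    simp [this]
  rw [← (measurePreserving_update μ i).measure_preimage
    (hA.inter (measurable_pi_apply i hB)).nullMeasurableSet, hpre, prod_prod]

theorem pi_inter_forall_mem {G : Finset ι} {A : Set (∀ j, X j)} (hA : MeasurableSet A)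
    (hAG : DependsOn (· ∈ A) (↑G)ᶜ) {B : ∀ i, Set (X i)} (hB : ∀ i, MeasurableSet (B i)) :
    Measure.pi μ (A ∩ {y | ∀ w ∈ G, y w ∈ B w})
      = Measure.pi μ A * ∏ w ∈ G, μ w (B w) := by
  induction G using Finset.induction with
  | empty => simp
  | insert w G hw ih =>
    have hsplit : A ∩ {y | ∀ x ∈ insert w G, y x ∈ B x}
        = (A ∩ {y | ∀ x ∈ G, y x ∈ B x}) ∩ eval w ⁻¹' B w := by
      ext y
      simp only [mem_inter_iff, mem_ofPred_eq, mem_preimage, Finset.forall_mem_insert]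
      tauto
    have hmeas : MeasurableSet (A ∩ {y | ∀ x ∈ G, y x ∈ B x}) := by
      simp only [ofPred_forall]
      exact hA.inter (.iInter fun x => .iInter fun _ => measurable_pi_apply x (hB x))
    have hdep : DependsOn (· ∈ A ∩ {y | ∀ x ∈ G, y x ∈ B x}) {w}ᶜ := fun y z h => by
      have hA' : (y ∈ A) = (z ∈ A) := hAG fun j hj => h j (by simp_all)
      have hG : ∀ x ∈ G, y x = z x := fun x hx => h x (by rintro rfl; exact hw hx)
      simp only [mem_inter_iff, mem_ofPred_eq, hA']
      exact propext (and_congr_right' (forall₂_congr fun x hx => by rw [hG x hx]))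
    rw [hsplit, pi_inter_eval_preimage μ hmeas hdep (hB w),
      ih (hAG.mono (by simp)), Finset.prod_insert hw, mul_assoc, mul_comm (μ w _)]

end MeasureTheory.Measure

section PowerIntegral

variable (μ : Measure ℝ) [IsProbabilityMeasure μ] [NullSingletonClass μ]

theorem measure_Iio_eq_ofReal_cdf (x : ℝ) : μ (Iio x) = ENNReal.ofReal (cdf μ x) := by
  rw [ofReal_cdf, measure_congr Iio_ae_eq_Iic]

theorem lintegral_Iio_measure_Iio_pow
    (hint : ∀ m : ℕ, 1 ≤ m → ∀ x : ℝ, 0 < x →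
      ∫ y in Ioc 0 x, cdf μ y ^ (m - 1) ∂μ = cdf μ x ^ m / m) (m : ℕ) (t : ℝ) :
    ∫⁻ u in Iio t, μ (Iio u) ^ m ∂μ = μ (Iio t) ^ (m + 1) / (m + 1) := by
  have hcdf0 : cdf μ 0 = 0 := by
    have h := hint 1 le_rfl 1 one_pos
    have hIoc : μ.real (Ioc 0 1) = cdf μ 1 - cdf μ 0 := by
      have h := (cdf μ).measure_Ioc 0 1
      rw [measure_cdf] at h
      rw [measureReal_def, h, ENNReal.toReal_ofReal (sub_nonneg.mpr ((cdf μ).mono zero_le_one))]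
    simp only [le_refl, tsub_eq_zero_of_le, pow_zero, setIntegral_const, smul_eq_mul, mul_one,
      Nat.cast_one, pow_one, div_one, hIoc] at h
    linarith
  rcases le_or_gt t 0 with ht | ht
  · have hzero : μ (Iio t) = 0 := by
      rw [measure_Iio_eq_ofReal_cdf, ENNReal.ofReal_eq_zero, ← hcdf0]
      exact (cdf μ).mono ht
    rw [Measure.restrict_eq_zero.mpr hzero, lintegral_zero_measure, hzero,
      zero_pow (Nat.succ_ne_zero m), ENNReal.zero_div]
  · have hIic0 : μ (Iic 0) = 0 := by rw [← ofReal_cdf, hcdf0, ENNReal.ofReal_zero]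
    have hbdd : Integrable (fun u => cdf μ u ^ m) (μ.restrict (Ioc 0 t)) :=
      .of_bound ((cdf μ).mono.measurable.pow_const m).aestronglyMeasurable 1
        (ae_of_all _ fun u => by
          rw [Real.norm_eq_abs, abs_of_nonneg (pow_nonneg (cdf_nonneg μ u) m)]
          exact pow_le_one₀ (cdf_nonneg μ u) (cdf_le_one μ u))
    calc ∫⁻ u in Iio t, μ (Iio u) ^ m ∂μ
        = ∫⁻ u in Iic 0 ∪ Ioc 0 t, ENNReal.ofReal (cdf μ u ^ m) ∂μ := by
          rw [Iic_union_Ioc_eq_Iic ht.le, setLIntegral_congr Iio_ae_eq_Iic]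
          simp only [measure_Iio_eq_ofReal_cdf, ENNReal.ofReal_pow (cdf_nonneg μ _)]
      _ = ENNReal.ofReal (∫ u in Ioc 0 t, cdf μ u ^ m ∂μ) := by
          rw [lintegral_union measurableSet_Ioc (Iic_disjoint_Ioc le_rfl),
            setLIntegral_measure_zero _ _ hIic0, zero_add,
            ofReal_integral_eq_lintegral_ofReal hbdd
              (ae_of_all _ fun u => pow_nonneg (cdf_nonneg μ u) m)]
      _ = μ (Iio t) ^ (m + 1) / (m + 1) := by
          have h := hint (m + 1) (Nat.le_add_left 1 m) t ht
          rw [Nat.add_sub_cancel] at h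
          rw [h, ENNReal.ofReal_div_of_pos (by positivity), measure_Iio_eq_ofReal_cdf,
            ENNReal.ofReal_pow (cdf_nonneg μ t)]
          norm_cast

end PowerIntegral

theorem tendsto_measure_inter_lt_atTop {α : Type*} [MeasurableSpace α]
    (ν : Measure α) (A : Set α) (f : α → ℝ) :
    Tendsto (fun t => ν (A ∩ {x | f x < t})) atTop (𝓝 (ν A)) := by
  have hmono : Monotone fun t => A ∩ {x | f x < t} := fun _ _ hst =>
    inter_subset_inter_right _ fun _ hx => lt_of_lt_of_le hx hst
  have hunion : ⋃ t, A ∩ {x | f x < t} = A := by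
    ext x
    simp only [mem_iUnion, mem_inter_iff, mem_ofPred_eq, exists_and_left, and_iff_left_iff_imp]
    exact fun _ => exists_gt (f x)
  have h := tendsto_measure_iUnion_atTop (μ := ν) hmono
  rwa [hunion] at h

theorem Fin.forall_lt_biUnion_Iic_iff {ι α : Type*} [DecidableEq ι] [Preorder α] {k : ℕ}
    {D : Fin (k + 1) → Finset ι} {v : Fin (k + 1) → ι}
    (hchain : ∀ l : Fin k, v l.castSucc ∈ D l.succ) (y : ι → α) :
    (∀ l, ∀ u ∈ (Finset.Iic l).biUnion D, y u < y (v l)) ↔ ∀ l, ∀ u ∈ D l, y u < y (v l) := by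
  refine ⟨fun h l u hu => h l u (Finset.subset_biUnion_of_mem D (Finset.mem_Iic.mpr le_rfl) hu),
    fun h l u hu => ?_⟩
  have hmono : Monotone (y ∘ v) :=
    Fin.monotone_iff_le_succ.mpr fun j => (h j.succ _ (hchain j)).le
  obtain ⟨j, hj, hu⟩ := Finset.mem_biUnion.mp hu
  exact (h j u hu).trans_le (hmono (Finset.mem_Iic.mp hj))

namespace WeightedDomination

theorem dependsOn_forall_lt_and_lt {ι : Type*} [DecidableEq ι] {k : ℕ}
    {C : Fin (k + 1) → Finset ι} {v : Fin (k + 1) → ι}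
    (hC : ∀ l : Fin k, insert (v l.castSucc) (C l.castSucc) ⊆ C l.succ) (t : ℝ) :
    DependsOn (· ∈ {y : ι → ℝ | (∀ l, ∀ u ∈ C l, y u < y (v l)) ∧ y (v (Fin.last k)) < t})
      ↑(insert (v (Fin.last k)) (C (Fin.last k))) := by
  intro y z hyz
  have hWmono : Monotone fun l => insert (v l) (C l) :=
    Fin.monotone_iff_le_succ.mpr fun l => (hC l).trans (Finset.subset_insert _ _)
  have hsub : ∀ l, insert (v l) (C l) ⊆ insert (v (Fin.last k)) (C (Fin.last k)) := fun l =>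
    hWmono (Fin.le_last l)
  have hv : ∀ l, y (v l) = z (v l) := fun l => hyz _ (hsub l (Finset.mem_insert_self _ _))
  have hc : ∀ l, ∀ u ∈ C l, y u = z u := fun l u hu =>
    hyz u (hsub l (Finset.mem_insert_of_mem hu))
  simp only [mem_ofPred_eq]
  exact propext (and_congr (forall_congr' fun l => forall₂_congr fun u hu => by
    rw [hv, hc l u hu]) (by rw [hv]))

theorem setOf_forall_lt_and_lt_succ {ι : Type*} [DecidableEq ι] {k : ℕ}
    {C : Fin (k + 2) → Finset ι} {v : Fin (k + 2) → ι}
    (hC : insert (v (Fin.last k).castSucc) (C (Fin.last k).castSucc) ⊆ C (Fin.last (k + 1)))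
    (t : ℝ) :
    {y : ι → ℝ | (∀ l, ∀ u ∈ C l, y u < y (v l)) ∧ y (v (Fin.last (k + 1))) < t}
      = {y | y (v (Fin.last (k + 1))) < t ∧
          (∀ w ∈ C (Fin.last (k + 1)) \ insert (v (Fin.last k).castSucc) (C (Fin.last k).castSucc),
            y w < y (v (Fin.last (k + 1)))) ∧
          (∀ l : Fin (k + 1), ∀ u ∈ C l.castSucc, y u < y (v l.castSucc)) ∧
          y (v (Fin.last k).castSucc) < y (v (Fin.last (k + 1)))} := by
  ext y
  simp only [mem_ofPred_eq, Fin.forall_fin_succ' (n := k + 1)]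
  constructor
  · rintro ⟨⟨hprev, hlast⟩, ht⟩
    exact ⟨ht, fun w hw => hlast w (Finset.sdiff_subset hw), hprev,
      hlast _ (hC (Finset.mem_insert_self _ _))⟩
  · rintro ⟨ht, hnew, hprev, hp⟩
    refine ⟨⟨hprev, fun w hw => ?_⟩, ht⟩
    by_cases hwW : w ∈ insert (v (Fin.last k).castSucc) (C (Fin.last k).castSucc)
    · rcases Finset.mem_insert.mp hwW with rfl | hwC
      · exact hp
      · exact (hprev (Fin.last k) w hwC).trans hp
    · exact hnew w (Finset.mem_sdiff.mpr ⟨hw, hwW⟩)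

variable {ι : Type*} [Fintype ι] [DecidableEq ι] {μ : Measure ℝ} [IsProbabilityMeasure μ]

theorem pi_lt_and_forall_lt_and_mem
    (hpow : ∀ (m : ℕ) (t : ℝ), ∫⁻ u in Iio t, μ (Iio u) ^ m ∂μ = μ (Iio t) ^ (m + 1) / (m + 1))
    {i : ι} {G : Finset ι} (hiG : i ∉ G) {E : ℝ → Set (ι → ℝ)}
    (hE : MeasurableSet {y | y ∈ E (y i)}) (hEdep : ∀ u, DependsOn (· ∈ E u) (↑(insert i G))ᶜ)
    {m : ℕ} {c : ℝ≥0∞} (hEval : ∀ u, Measure.pi (fun _ => μ) (E u) = μ (Iio u) ^ m * c)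
    (t : ℝ) :
    Measure.pi (fun _ => μ) {y | y i < t ∧ (∀ w ∈ G, y w < y i) ∧ y ∈ E (y i)}
      = μ (Iio t) ^ (m + #G + 1) / ((m + #G : ℕ) + 1) * c := by
  set X := {y : ι → ℝ | y i < t ∧ (∀ w ∈ G, y w < y i) ∧ y ∈ E (y i)}
  have hEi : ∀ u (y : ι → ℝ), update y i u ∈ E u ↔ y ∈ E u := fun u y =>
    propext_iff.mp <| (hEdep u).apply_update (by simp) y u
  have hEu : ∀ u, MeasurableSet (E u) := fun u => by
    convert measurable_update_left (a := i) (x := u) hE using 1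
    ext y
    simp [hEi]
  have hslice : ∀ u, Measure.pi (fun _ => μ) {y | update y i u ∈ X}
      = (Iio t).indicator (fun u => μ (Iio u) ^ (m + #G) * c) u := by
    intro u
    by_cases hu : u < t
    · have hXu : {y | update y i u ∈ X} = E u ∩ {y | ∀ w ∈ G, y w ∈ Iio u} := by
        ext y
        simp only [X, mem_ofPred_eq, update_self, hu, hEi, true_and, mem_inter_iff, mem_Iio]
        rw [and_comm]
        exact and_congr_right' (forall₂_congr fun w hw => by
          rw [update_of_ne (ne_of_mem_of_not_mem hw hiG)])
      rw [hXu, Measure.pi_inter_forall_mem _ (hEu u) ((hEdep u).mono (by simp))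
          fun _ => measurableSet_Iio, Finset.prod_const, hEval,
        indicator_of_mem (show u ∈ Iio t from hu), pow_add]
      ring
    · have hXu : {y | update y i u ∈ X} = ∅ := by
        ext y
        simp [X, hu]
      rw [hXu, measure_empty, indicator_of_notMem (show u ∉ Iio t from hu)]
  have hmono : Monotone fun u => μ (Iio u) := fun _ _ h => measure_mono (Iio_subset_Iio h)
  rw [Measure.pi_eq_lintegral_update _ i (by measurability)]
  simp_rw [hslice]
  rw [lintegral_indicator measurableSet_Iio,
    lintegral_mul_const _ (hmono.measurable.pow_const _), hpow]

theorem pi_forall_lt_and_lt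
    (hpow : ∀ (m : ℕ) (t : ℝ), ∫⁻ u in Iio t, μ (Iio u) ^ m ∂μ = μ (Iio t) ^ (m + 1) / (m + 1))
    {k : ℕ} {C : Fin (k + 1) → Finset ι} {v : Fin (k + 1) → ι} (hvC : ∀ l, v l ∉ C l)
    (hC : ∀ l : Fin k, insert (v l.castSucc) (C l.castSucc) ⊆ C l.succ) (t : ℝ) :
    Measure.pi (fun _ => μ) {y | (∀ l, ∀ u ∈ C l, y u < y (v l)) ∧ y (v (Fin.last k)) < t}
      = μ (Iio t) ^ (#(C (Fin.last k)) + 1) * ∏ l, ((#(C l) : ℝ≥0∞) + 1)⁻¹ := by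
  induction k generalizing t with
  | zero =>
    have h := pi_lt_and_forall_lt_and_mem hpow (hvC 0) (E := fun _ => univ) (by simp)
      (fun _ _ _ _ => rfl) (m := 0) (c := 1) (by simp) t
    have hset : {y : ι → ℝ | (∀ l, ∀ u ∈ C l, y u < y (v l)) ∧ y (v (Fin.last 0)) < t}
        = {y | y (v 0) < t ∧ (∀ w ∈ C 0, y w < y (v 0)) ∧ y ∈ univ} := by
      ext y
      simp only [mem_ofPred_eq, Fin.forall_fin_succ' (n := 0), IsEmpty.forall_iff, true_and,
        Fin.last_zero, mem_univ, and_true]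
      exact and_comm
    rw [hset, h]
    simp [div_eq_mul_inv]
  | succ k ih =>
    have hC' : ∀ l : Fin k, insert (v l.castSucc.castSucc) (C l.castSucc.castSucc)
        ⊆ C l.succ.castSucc := fun l => Fin.succ_castSucc l ▸ hC l.castSucc
    have hWlast : insert (v (Fin.last k).castSucc) (C (Fin.last k).castSucc)
        ⊆ C (Fin.last (k + 1)) := by simpa using hC (Fin.last k)
    set W := insert (v (Fin.last k).castSucc) (C (Fin.last k).castSucc)
    set E : ℝ → Set (ι → ℝ) := fun u =>
      {y | (∀ l : Fin (k + 1), ∀ w ∈ C l.castSucc, y w < y (v l.castSucc)) ∧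
        y (v (Fin.last k).castSucc) < u}
    have hEmeas : MeasurableSet {y | y ∈ E (y (v (Fin.last (k + 1))))} := by
      measurability
    have hEdep : ∀ u, DependsOn (· ∈ E u)
        (↑(insert (v (Fin.last (k + 1))) (C (Fin.last (k + 1)) \ W)))ᶜ := fun u =>
      (dependsOn_forall_lt_and_lt (v := fun l => v l.castSucc) hC' u).mono fun w hw => by
        simp only [mem_compl_iff, Finset.coe_insert, mem_insert_iff, Finset.mem_coe, not_or]
        exact ⟨fun h => hvC _ (h ▸ hWlast hw), fun h => (Finset.mem_sdiff.mp h).2 hw⟩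
    have hprev := ih (C := fun l => C l.castSucc) (v := fun l => v l.castSucc)
      (fun l => hvC _) hC'
    have h := pi_lt_and_forall_lt_and_mem hpow (fun h => hvC _ (Finset.sdiff_subset h)) hEmeas
      hEdep hprev t
    have hcard : #(C (Fin.last k).castSucc) + 1 + #(C (Fin.last (k + 1)) \ W)
        = #(C (Fin.last (k + 1))) := by
      rw [← Finset.card_insert_of_notMem (hvC _), add_comm,
        Finset.card_sdiff_add_card_eq_card hWlast]
    rw [setOf_forall_lt_and_lt_succ hWlast, Fin.prod_univ_castSucc]
    refine h.trans ?_
    rw [hcard, div_eq_mul_inv, mul_assoc, mul_comm _⁻¹]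

theorem pi_forall_lt
    (hpow : ∀ (m : ℕ) (t : ℝ), ∫⁻ u in Iio t, μ (Iio u) ^ m ∂μ = μ (Iio t) ^ (m + 1) / (m + 1))
    {k : ℕ} {C : Fin (k + 1) → Finset ι} {v : Fin (k + 1) → ι} (hvC : ∀ l, v l ∉ C l)
    (hC : ∀ l : Fin k, insert (v l.castSucc) (C l.castSucc) ⊆ C l.succ) :
    Measure.pi (fun _ => μ) {y | ∀ l, ∀ u ∈ C l, y u < y (v l)}
      = ∏ l, ((#(C l) : ℝ≥0∞) + 1)⁻¹ := by
  have hμ : Tendsto (fun t => μ (Iio t)) atTop (𝓝 1) := by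
    have h := tendsto_measure_inter_lt_atTop μ univ id
    simp only [measure_univ, univ_inter, id] at h
    exact h
  have hlim := ENNReal.Tendsto.mul_const (b := ∏ l, ((#(C l) : ℝ≥0∞) + 1)⁻¹)
    (((ENNReal.continuous_pow (#(C (Fin.last k)) + 1)).tendsto 1).comp hμ) (Or.inl (by simp))
  rw [one_pow, one_mul] at hlim
  refine tendsto_nhds_unique (tendsto_measure_inter_lt_atTop _ _ fun y => y (v (Fin.last k))) ?_
  exact hlim.congr fun t => (pi_forall_lt_and_lt hpow hvC hC t).symm

end WeightedDomination

theorem weighted_dominating_set_prob_general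
    {Ω : Type*} [MeasurableSpace Ω] (P : Measure Ω) [IsProbabilityMeasure P]
    (n : ℕ) (S : Fin n → Ω → ℝ)
    (hmeas : ∀ i, Measurable (S i))
    (hindep : iIndepFun S P)
    (hident : ∀ i j, Measure.map (S i) P = Measure.map (S j) P)
    (hcont : ∀ i (x : ℝ), P {ω | S i ω = x} = 0)
    (F : ℝ → ℝ) (hF : ∀ i x, F x = (P {ω | S i ω ≤ x}).toReal)
    (hint : ∀ (i : Fin n) (m : ℕ), 1 ≤ m → ∀ x : ℝ, 0 < x →
      ∫ y in Set.Ioc (0 : ℝ) x, F y ^ (m - 1) ∂(Measure.map (S i) P) = F x ^ m / m)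
    (k : ℕ) (v : Fin (k + 1) → Fin n)
    (D : Fin n → Finset (Fin n))
    (hlast : v (Fin.last k) ∉ (Finset.Iic (Fin.last k)).biUnion (fun j => D (v j)))
    (hnest : ∀ l : Fin k, v l.castSucc ∈ D (v l.succ) ∧
      v l.castSucc ∉ (Finset.Iic l.castSucc).biUnion (fun j => D (v j))) :
    P {ω | ∀ l : Fin (k + 1), ∀ u ∈ D (v l), S u ω < S (v l) ω} =
      ∏ l : Fin (k + 1),
        (1 : ℝ≥0∞) / (((Finset.Iic l).biUnion (fun j => D (v j))).card + 1) := by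
  set μ := P.map (S (v 0))
  have : IsProbabilityMeasure μ := Measure.isProbabilityMeasure_map (hmeas _).aemeasurable
  have : NullSingletonClass μ :=
    ⟨fun x => by rw [Measure.map_apply (hmeas _) (measurableSet_singleton x)]; exact hcont _ x⟩
  have hcdf : ⇑(cdf μ) = F := funext fun x => by
    rw [cdf_eq_real, hF (v 0) x, measureReal_def, Measure.map_apply (hmeas _) measurableSet_Iic]
    rfl
  have hpow := lintegral_Iio_measure_Iio_pow μ (hcdf ▸ hint (v 0))
  have hlaw : P.map (fun ω i => S i ω) = Measure.pi fun _ => μ := by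
    rw [hindep.map_fun_eq_pi_map fun i => (hmeas i).aemeasurable]
    simp_rw [μ, hident _ (v 0)]
  set C := fun l => (Finset.Iic l).biUnion fun j => D (v j)
  have hvC : ∀ l, v l ∉ C l := Fin.lastCases hlast fun l => (hnest l).2
  have hC : ∀ l : Fin k, insert (v l.castSucc) (C l.castSucc) ⊆ C l.succ := fun l =>
    Finset.insert_subset
      (Finset.mem_biUnion.mpr ⟨l.succ, Finset.mem_Iic.mpr le_rfl, (hnest l).1⟩)
      (Finset.biUnion_subset_biUnion_of_subset_left _
        (Finset.Iic_subset_Iic.mpr Fin.castSucc_lt_succ.le))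
  calc P {ω | ∀ l : Fin (k + 1), ∀ u ∈ D (v l), S u ω < S (v l) ω}
      = Measure.pi (fun _ => μ) {y | ∀ l, ∀ u ∈ D (v l), y u < y (v l)} := by
        rw [← hlaw, Measure.map_apply (measurable_pi_lambda _ hmeas) (by measurability)]
        rfl
    _ = Measure.pi (fun _ => μ) {y | ∀ l, ∀ u ∈ C l, y u < y (v l)} := by
        congr 1
        ext y
        exact (Fin.forall_lt_biUnion_Iic_iff (D := fun j => D (v j))
          (fun l => (hnest l).1) y).symm
    _ = _ := by
        rw [WeightedDomination.pi_forall_lt hpow hvC hC]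
        exact Finset.prod_congr rfl fun l _ => (one_div _).symm

/-- Under the weak-nested property of the domination neighbourhoods, the probability that
every `v l` is a weighted dominating vertex equals `∏ l, 1 / c (v l)`, where
`c (v l) = 1 + #(⋃_{j ≤ l} D (v j))`. -/
theorem weighted_dominating_set_prob
    {Ω : Type*} [MeasurableSpace Ω] (P : Measure Ω) [IsProbabilityMeasure P]
    (n : ℕ) (S : Fin n → Ω → ℝ)
    (hmeas : ∀ i, Measurable (S i))
    (hindep : iIndepFun S P)
    (hident : ∀ i j, Measure.map (S i) P = Measure.map (S j) P)
    (hcont : ∀ i (x : ℝ), P {ω | S i ω = x} = 0)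
    (F : ℝ → ℝ) (hF : ∀ i x, F x = (P {ω | S i ω ≤ x}).toReal)
    (hint : ∀ (i : Fin n) (m : ℕ), 1 ≤ m → ∀ x : ℝ, 0 < x →
      ∫ y in Set.Ioc (0 : ℝ) x, F y ^ (m - 1) ∂(Measure.map (S i) P) = F x ^ m / m)
    (k : ℕ) (v : Fin (k + 1) → Fin n) (hmono : StrictMono v)
    (D : Fin n → Finset (Fin n)) (hDnot : ∀ i, i ∉ D i)
    (hlast : v (Fin.last k) ∉ (Finset.Iic (Fin.last k)).biUnion (fun j => D (v j)))
    (hnest : ∀ l : Fin k, v l.castSucc ∈ D (v l.succ) ∧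
      v l.castSucc ∉ (Finset.Iic l.castSucc).biUnion (fun j => D (v j))) :
    P {ω | ∀ l : Fin (k + 1), ∀ u ∈ D (v l), S u ω < S (v l) ω} =
      ∏ l : Fin (k + 1),
        (1 : ℝ≥0∞) / (((Finset.Iic l).biUnion (fun j => D (v j))).card + 1) :=
  weighted_dominating_set_prob_general P n S hmeas hindep hident hcont F hF hint k v D hlast hnest
end

section
/- For any finite simple graph H with m edges and maximum degree Δ, the maximum average degree satisfies h_av(H) ≤ (2√2 + 2)·(mΔ)^{1/3}. -/
/-!
A subgraph `Γ` with `n` vertices and `e` edges satisfies `2e ≤ n²` (it has at most `n choose 2`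
edges), `2e ≤ nΔ` (handshake lemma) and `e ≤ m`. Multiplying the three bounds gives
`(2e / n)³ ≤ 2mΔ`, so every average degree is at most `(2mΔ)^{1/3} ≤ (2√2 + 2)(mΔ)^{1/3}`.
-/

open Finset

namespace SimpleGraph

variable {W : Type*} [Fintype W] (G : SimpleGraph W) [DecidableRel G.Adj]

lemma two_mul_card_edgeFinset_le_card_sq : 2 * #G.edgeFinset ≤ Fintype.card W ^ 2 := by
  set n := Fintype.card W
  calc 2 * #G.edgeFinset ≤ 2 * n.choose 2 := by gcongr; exact G.card_edgeFinset_le_card_choose_two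
    _ = n * (n - 1) := by
      rw [Nat.choose_two_right, Nat.mul_div_cancel' (Nat.even_mul_pred_self n).two_dvd]
    _ ≤ n ^ 2 := by rw [sq]; exact Nat.mul_le_mul_left n (Nat.sub_le n 1)

lemma two_mul_card_edgeFinset_le_card_mul {d : ℕ} (hd : ∀ v, G.degree v ≤ d) :
    2 * #G.edgeFinset ≤ Fintype.card W * d := by
  rw [← sum_degrees_eq_twice_card_edges, ← smul_eq_mul, ← card_univ]
  exact sum_le_card_nsmul _ _ d fun v _ => hd v

namespace Subgraph

variable {V : Type*} {H : SimpleGraph V}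

lemma ncard_coe_edgeSet (Γ : H.Subgraph) : Γ.coe.edgeSet.ncard = Γ.edgeSet.ncard := by
  rw [← Γ.image_coe_edgeSet_coe,
    Set.ncard_image_of_injective _ (Sym2.map.injective Subtype.val_injective)]

lemma two_mul_ncard_edgeSet_le_ncard_verts_sq [Finite V] (Γ : H.Subgraph) :
    2 * Γ.edgeSet.ncard ≤ Γ.verts.ncard ^ 2 := by
  classical
  have := Fintype.ofFinite V
  rw [← ncard_coe_edgeSet, Set.ncard_eq_toFinset_card', ← edgeFinset,
    Set.ncard_eq_toFinset_card', Set.toFinset_card]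
  exact Γ.coe.two_mul_card_edgeFinset_le_card_sq

lemma two_mul_ncard_edgeSet_le_ncard_verts_mul_maxDegree [Fintype V] [DecidableRel H.Adj]
    (Γ : H.Subgraph) : 2 * Γ.edgeSet.ncard ≤ Γ.verts.ncard * H.maxDegree := by
  classical
  rw [← ncard_coe_edgeSet, Set.ncard_eq_toFinset_card', ← edgeFinset,
    Set.ncard_eq_toFinset_card', Set.toFinset_card]
  refine Γ.coe.two_mul_card_edgeFinset_le_card_mul fun v => ?_
  rw [coe_degree]
  exact (Γ.degree_le v).trans (H.degree_le_maxDegree v)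

lemma avg_degree_pow_three_le [Fintype V] [DecidableRel H.Adj] (Γ : H.Subgraph) :
    (2 * (Γ.edgeSet.ncard : ℝ) / Γ.verts.ncard) ^ 3 ≤
      2 * ((H.edgeSet.ncard : ℝ) * H.maxDegree) := by
  have h_sq : 2 * (Γ.edgeSet.ncard : ℝ) ≤ (Γ.verts.ncard : ℝ) ^ 2 := by
    exact_mod_cast Γ.two_mul_ncard_edgeSet_le_ncard_verts_sq
  have h_deg : 2 * (Γ.edgeSet.ncard : ℝ) ≤ Γ.verts.ncard * H.maxDegree := by
    exact_mod_cast Γ.two_mul_ncard_edgeSet_le_ncard_verts_mul_maxDegree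
  have h_sub : 2 * (Γ.edgeSet.ncard : ℝ) ≤ 2 * H.edgeSet.ncard := by
    gcongr
    · exact H.edgeSet.toFinite
    · exact Γ.edgeSet_subset
  rcases Nat.eq_zero_or_pos Γ.verts.ncard with hn | hn
  · rw [hn, Nat.cast_zero, div_zero, zero_pow three_ne_zero]; positivity
  rw [div_pow, div_le_iff₀ (by positivity)]
  calc (2 * (Γ.edgeSet.ncard : ℝ)) ^ 3
      = 2 * (Γ.edgeSet.ncard : ℝ) * (2 * Γ.edgeSet.ncard * (2 * Γ.edgeSet.ncard)) := by ring
    _ ≤ (Γ.verts.ncard : ℝ) ^ 2 * (Γ.verts.ncard * H.maxDegree * (2 * H.edgeSet.ncard)) := by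
      gcongr
    _ = 2 * ((H.edgeSet.ncard : ℝ) * H.maxDegree) * (Γ.verts.ncard : ℝ) ^ 3 := by ring

end Subgraph

end SimpleGraph

/-- For a finite simple graph `H` with `m` edges and maximum degree `Δ`, the maximum average
degree satisfies `h_av(H) ≤ (2√2 + 2) (mΔ)^{1/3}`. -/
theorem max_avg_degree_le_cuberoot
    {V : Type*} [Fintype V] (H : SimpleGraph V) [DecidableRel H.Adj] (hav : ℝ)
    (hhav : IsGreatest
      {d : ℝ | ∃ Γ : H.Subgraph, Γ.verts.Nonempty ∧
        d = 2 * (Γ.edgeSet.ncard : ℝ) / (Γ.verts.ncard : ℝ)} hav) :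
    hav ≤ (2 * Real.sqrt 2 + 2) *
      ((H.edgeSet.ncard : ℝ) * (H.maxDegree : ℝ)) ^ ((1 : ℝ) / 3) := by
  obtain ⟨⟨Γ, -, rfl⟩, -⟩ := hhav
  set md : ℝ := (H.edgeSet.ncard : ℝ) * H.maxDegree
  have hmd : 0 ≤ md := by positivity
  have h_cube : 2 * (Γ.edgeSet.ncard : ℝ) / Γ.verts.ncard ≤ (2 * md) ^ ((1 : ℝ) / 3) := by
    rw [one_div, Real.le_rpow_inv_iff_of_pos (by positivity) (by positivity) three_pos,
      Real.rpow_ofNat]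
    exact Γ.avg_degree_pow_three_le
  have h_two : (2 : ℝ) ^ ((1 : ℝ) / 3) ≤ 2 * Real.sqrt 2 + 2 := by
    have := Real.rpow_le_rpow_of_exponent_le one_le_two (by norm_num : (1 : ℝ) / 3 ≤ 1)
    rw [Real.rpow_one] at this
    linarith [Real.sqrt_nonneg 2]
  calc _ ≤ (2 * md) ^ ((1 : ℝ) / 3) := h_cube
    _ = 2 ^ ((1 : ℝ) / 3) * md ^ ((1 : ℝ) / 3) := Real.mul_rpow zero_le_two hmd
    _ ≤ _ := by gcongr
end

section
/- Let G be an inhomogeneous random graph on n vertices where each potential edge (u,v) is present independently with probability p(u,v). Suppose for every vertex set V of size l ≥ n^α (log n)³ the averaged edge probability (1/C(l,2)) Σ_{u,v ∈ V} p(u,v) is at least C₁/n^{β_low}, with 0 ≤ β_low ≤ α. Then there is a constant D₂ > 0 such that for all large n, P(χ(G) ≥ n^{1−α}/(log n)³) ≥ 1 − exp(−D₂ n^{2α−β_low}(log n)^6). -/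
/-!
If `χ(G) < n / t` with `t = n^α (log n)³`, a largest colour class contains a stable set of
`m = ⌊t⌋ + 1 > t` vertices. By independence of the edges, a fixed `m`-set is stable with
probability `∏ (1 - p(u,v)) ≤ exp (-∑ p(u,v)) ≤ exp (-C(m,2) C₁ / n^β)`, the last step by the
density hypothesis. There are at most `n^m = exp (m log n)` such sets, and since
`C(m,2) C₁ / n^β ≥ C₁ n^(2α-β) (log n)⁶ / 4` exceeds `m log n ≤ 2 n^α (log n)⁴` by the factor
`C₁ n^(α-β) (log n)² / 8 → ∞` (this is where `β ≤ α` enters), the union bound leaves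
`exp (-C₁ n^(2α-β) (log n)⁶ / 8)`.
-/

open MeasureTheory ProbabilityTheory Finset Filter Real
open scoped ENNReal

theorem Finset.sum_offDiag_sym2Mk_eq_two_nsmul {α M : Type*} [DecidableEq α] [AddCommMonoid M]
    (s : Finset α) (f : Sym2 α → M) :
    ∑ x ∈ s.offDiag, f s(x.1, x.2) = 2 • ∑ e ∈ s.offDiag.image Sym2.mk.uncurry, f e := by
  change ∑ x ∈ s.offDiag, f (Sym2.mk.uncurry x) = _
  rw [Finset.sum_comp, Finset.smul_sum]
  refine Finset.sum_congr rfl fun e he => ?_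
  obtain ⟨⟨a, b⟩, hab, rfl⟩ := Finset.mem_image.1 he
  have hab := Finset.mem_offDiag.1 hab
  have hfiber :
      {x ∈ s.offDiag | Sym2.mk.uncurry x = Sym2.mk.uncurry (a, b)} = {(a, b), (b, a)} := by
    ext ⟨x, y⟩
    grind
  rw [hfiber, Finset.card_pair (by grind)]

theorem Finset.sum_sum_eq_two_nsmul_sum_image_offDiag {α M : Type*} [DecidableEq α]
    [AddCommMonoid M] (s : Finset α) (p : α → α → M) (hsym : ∀ u v, p u v = p v u)
    (hdiag : ∀ u, p u u = 0) :
    ∑ u ∈ s, ∑ v ∈ s, p u v = 2 • ∑ e ∈ s.offDiag.image Sym2.mk.uncurry, Sym2.lift ⟨p, hsym⟩ e := by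
  rw [← Finset.sum_offDiag_sym2Mk_eq_two_nsmul, ← Finset.sum_product', ← Finset.diag_union_offDiag,
    Finset.sum_union (Finset.disjoint_diag_offDiag s), Finset.sum_diag]
  simp [hdiag]

namespace SimpleGraph

variable {V : Type*} {G : SimpleGraph V}

theorem Colorable.exists_isNIndepSet [Fintype V] {k m : ℕ} (hG : G.Colorable k)
    (h : k * m < Fintype.card V) : ∃ s, G.IsNIndepSet (m + 1) s := by
  classical
  obtain ⟨C⟩ := hG
  obtain ⟨c, -, hc⟩ := Finset.exists_lt_card_fiber_of_mul_lt_card_of_maps_to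
    (s := univ) (t := univ) (f := C) (fun _ _ => mem_univ _) (by simpa using h)
  obtain ⟨s, hsc, hcard⟩ := Finset.exists_subset_card_eq (Nat.succ_le_of_lt hc)
  refine ⟨s, (C.isIndepSet_colorClass c).mono fun v hv => ?_, hcard⟩
  exact (Finset.mem_filter.1 (hsc hv)).2

theorem exists_isNIndepSet_of_chromaticNumber_lt [Fintype V] {t : ℝ} (ht : 0 < t)
    (h : (G.chromaticNumber : ℝ≥0∞) < ENNReal.ofReal (Fintype.card V / t)) :
    ∃ s, G.IsNIndepSet (⌊t⌋₊ + 1) s := by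
  have hχ : G.chromaticNumber = G.chromaticNumber.toNat :=
    (ENat.natCast_toNat (G.chromaticNumber_le_card.trans_lt (ENat.natCast_lt_top _)).ne).symm
  rw [hχ, ENat.toENNReal_coe, ← ENNReal.ofReal_natCast,
    ENNReal.ofReal_lt_ofReal_iff_of_nonneg (Nat.cast_nonneg _), lt_div_iff₀ ht] at h
  refine G.colorable_chromaticNumber_of_fintype.exists_isNIndepSet (Nat.cast_lt (α := ℝ) |>.1 ?_)
  push_cast
  calc _ ≤ (G.chromaticNumber.toNat : ℝ) * t := by gcongr; exact Nat.floor_le ht.le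
    _ < _ := h

theorem IsIndepSet.fromRel_eq_false {X : Sym2 V → Bool} {s : Set V}
    (hs : (fromRel fun u v => X s(u, v) = true).IsIndepSet s) {u v : V}
    (hu : u ∈ s) (hv : v ∈ s) (huv : u ≠ v) : X s(u, v) = false := by
  by_contra h
  exact hs hu hv huv ((fromRel_adj _ _ _).2 ⟨huv, .inl (by simpa using h)⟩)

end SimpleGraph

theorem ENNReal.one_sub_ofReal_le_ofReal_exp_neg (q : ℝ) :
    1 - ENNReal.ofReal q ≤ ENNReal.ofReal (exp (-q)) := by
  rcases le_total q 0 with hq | hq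
  · rw [ENNReal.ofReal_of_nonpos hq, tsub_zero, ← ENNReal.ofReal_one]
    exact ENNReal.ofReal_le_ofReal (one_le_exp (by linarith))
  · rw [← ENNReal.ofReal_one, ← ENNReal.ofReal_sub _ hq]
    exact ENNReal.ofReal_le_ofReal (by linarith [add_one_le_exp (-q)])

theorem measure_biInter_eq_false_le_exp_neg_sum {Ω ι : Type*} [MeasurableSpace Ω]
    {P : Measure Ω} [IsProbabilityMeasure P] {X : ι → Ω → Bool} (hX : ∀ i, Measurable (X i))
    (hind : iIndepFun X P) (s : Finset ι) (q : ι → ℝ)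
    (hq : ∀ i ∈ s, P {ω | X i ω = true} = ENNReal.ofReal (q i)) :
    P (⋂ i ∈ s, {ω | X i ω = false}) ≤ ENNReal.ofReal (exp (-∑ i ∈ s, q i)) := by
  have hfalse : ∀ i ∈ s, P {ω | X i ω = false} = 1 - ENNReal.ofReal (q i) := fun i hi => by
    have hcompl : {ω | X i ω = false} = {ω | X i ω = true}ᶜ := by ext; simp
    rw [← hq i hi, hcompl]
    exact prob_compl_eq_one_sub (hX i (measurableSet_singleton true))
  rw [hind.meas_biInter (s := fun i => {ω | X i ω = false}) fun i _ => ⟨{false}, trivial, rfl⟩,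
    ← Finset.sum_neg_distrib, exp_sum, ENNReal.ofReal_prod_of_nonneg fun i _ => (exp_pos _).le]
  exact Finset.prod_le_prod' fun i hi =>
    (hfalse i hi).trans_le (ENNReal.one_sub_ofReal_le_ofReal_exp_neg (q i))

theorem one_sub_le_measure_of_measure_compl_le {Ω : Type*} [MeasurableSpace Ω] {P : Measure Ω}
    [IsProbabilityMeasure P] {s : Set Ω} {r : ℝ≥0∞} (h : P sᶜ ≤ r) : 1 - r ≤ P s := by
  rw [tsub_le_iff_right, ← measure_univ (μ := P)]
  exact (measure_univ_le_add_compl s).trans (by gcongr)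

theorem measure_exists_isNIndepSet_fromRel_le {V Ω : Type*} [Fintype V] [DecidableEq V]
    [MeasurableSpace Ω] {P : Measure Ω} [IsProbabilityMeasure P] {X : Sym2 V → Ω → Bool}
    (hX : ∀ e, Measurable (X e)) (hind : iIndepFun X P) (p : V → V → ℝ)
    (hsym : ∀ u v, p u v = p v u) (hdiag : ∀ u, p u u = 0)
    (hp : ∀ u v, u ≠ v → P {ω | X s(u, v) ω = true} = ENNReal.ofReal (p u v)) (m : ℕ) (a : ℝ)
    (ha : ∀ s : Finset V, #s = m → 2 * m.choose 2 * a ≤ ∑ u ∈ s, ∑ v ∈ s, p u v) :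
    P {ω | ∃ s, (SimpleGraph.fromRel fun u v => X s(u, v) ω = true).IsNIndepSet m s} ≤
      ENNReal.ofReal ((Fintype.card V).choose m * exp (-(m.choose 2 * a))) := by
  set absent : Finset V → Set Ω := fun s =>
    ⋂ e ∈ s.offDiag.image Sym2.mk.uncurry, {ω | X e ω = false}
  have hsub : {ω | ∃ s, (SimpleGraph.fromRel fun u v => X s(u, v) ω = true).IsNIndepSet m s} ⊆
      ⋃ s ∈ powersetCard m univ, absent s := by
    rintro ω ⟨s, hs⟩
    refine Set.mem_biUnion (mem_powersetCard.2 ⟨subset_univ s, hs.card_eq⟩) ?_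
    simp only [absent, Set.mem_iInter, Finset.mem_image]
    rintro _ ⟨x, hx, rfl⟩
    obtain ⟨hx₁, hx₂, hne⟩ := Finset.mem_offDiag.1 hx
    exact hs.isIndepSet.fromRel_eq_false (X := (X · ω)) hx₁ hx₂ hne
  have habsent : ∀ s ∈ powersetCard m (univ : Finset V),
      P (absent s) ≤ ENNReal.ofReal (exp (-(m.choose 2 * a))) := by
    intro s hs
    refine (measure_biInter_eq_false_le_exp_neg_sum hX hind _ (Sym2.lift ⟨p, hsym⟩) ?_).trans ?_
    · simp only [Finset.mem_image]
      rintro _ ⟨x, hx, rfl⟩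
      exact hp x.1 x.2 (Finset.mem_offDiag.1 hx).2.2
    · have := ha s (mem_powersetCard.1 hs).2
      rw [s.sum_sum_eq_two_nsmul_sum_image_offDiag p hsym hdiag, two_nsmul] at this
      gcongr
      linarith
  calc _ ≤ P (⋃ s ∈ powersetCard m univ, absent s) := measure_mono hsub
    _ ≤ ∑ s ∈ powersetCard m univ, P (absent s) := measure_biUnion_finset_le _ _
    _ ≤ ∑ s ∈ powersetCard m (univ : Finset V), ENNReal.ofReal (exp (-(m.choose 2 * a))) :=
      Finset.sum_le_sum habsent
    _ = _ := by
      rw [sum_const, card_powersetCard, card_univ, nsmul_eq_mul, ENNReal.ofReal_mul (by positivity),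
        ENNReal.ofReal_natCast]

theorem natCast_mul_add_le_choose_two_mul {m : ℕ} {t L a : ℝ} (ht : 1 ≤ t) (htm : t < m)
    (hmt : (m : ℝ) ≤ t + 1) (hL : 0 ≤ L) (hLa : 16 * L ≤ a * t) :
    m * L + a * t ^ 2 / 8 ≤ m.choose 2 * a := by
  have ha : 0 ≤ a := nonneg_of_mul_nonneg_left (b := t) (by linarith) (by linarith)
  have hm2 : (2 : ℝ) ≤ m := by exact_mod_cast (show 1 < m by exact_mod_cast ht.trans_lt htm)
  have hchoose : t ^ 2 / 4 ≤ m.choose 2 := by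
    rw [Nat.cast_choose_two]
    nlinarith
  have hmL : m * L ≤ a * t ^ 2 / 8 := by nlinarith
  nlinarith

theorem choose_mul_exp_neg_le {n : ℕ} {t a : ℝ} (ht : 1 ≤ t) (hta : 16 * log n ≤ a * t) :
    (n.choose (⌊t⌋₊ + 1) : ℝ) * exp (-((⌊t⌋₊ + 1).choose 2 * a)) ≤ exp (-(a * t ^ 2 / 8)) := by
  set m := ⌊t⌋₊ + 1
  have htm : t < m := by exact_mod_cast Nat.lt_floor_add_one t
  have hmt : (m : ℝ) ≤ t + 1 := by
    simp only [m, Nat.cast_add_one]; linarith [Nat.floor_le (by linarith : 0 ≤ t)]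
  have hchoose : (n.choose m : ℝ) ≤ exp (m * log n) := by
    rw [exp_nat_mul]
    exact (Nat.cast_le.2 (Nat.choose_le_pow n m)).trans (by push_cast; gcongr; exact le_exp_log _)
  have := natCast_mul_add_le_choose_two_mul ht htm hmt (log_natCast_nonneg n) hta
  calc _ ≤ exp (m * log n) * exp (-(m.choose 2 * a)) := by gcongr
    _ = exp (m * log n - m.choose 2 * a) := by rw [← exp_add]; ring_nf
    _ ≤ _ := by gcongr; linarith

theorem tendsto_rpow_mul_log_pow_atTop {a : ℝ} (ha : 0 ≤ a) {k : ℕ} (hk : k ≠ 0) :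
    Tendsto (fun n : ℕ => (n : ℝ) ^ a * log n ^ k) atTop atTop := by
  refine tendsto_atTop_mono' _ ?_
    ((tendsto_pow_atTop hk).comp (tendsto_log_atTop.comp tendsto_natCast_atTop_atTop))
  filter_upwards [eventually_ge_atTop 1] with n hn
  have hn : (1 : ℝ) ≤ n := by exact_mod_cast hn
  exact le_mul_of_one_le_left (pow_nonneg (log_nonneg hn) k) (one_le_rpow hn ha)

/-- Lower bound on the chromatic number of an inhomogeneous random graph: if all averaged
edge probabilities over vertex sets of size at least `n^α (log n)³` are at least
`C₁ / n^{β_low}` with `0 ≤ β_low ≤ α`, then there is `D₂ > 0` such that for all large `n`,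
`χ(G) ≥ n^{1-α} / (log n)³` with probability at least
`1 - exp(-D₂ n^{2α - β_low} (log n)⁶)`. -/
theorem chromatic_lower_bound_inhomogeneous
    (α βlow C₁ : ℝ) (hβ0 : 0 ≤ βlow) (hβα : βlow ≤ α) (hC₁ : 0 < C₁) :
    ∃ D₂ : ℝ, 0 < D₂ ∧ ∃ N : ℕ, ∀ n : ℕ, N ≤ n →
      ∀ (Ω : Type) (_ : MeasurableSpace Ω) (P : Measure Ω), IsProbabilityMeasure P →
      ∀ (X : Sym2 (Fin n) → Ω → Bool) (p : Fin n → Fin n → ℝ),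
      (∀ e, Measurable (X e)) →
      iIndepFun X P →
      (∀ u v, p u v = p v u) →
      (∀ u, p u u = 0) →
      (∀ u v, 0 ≤ p u v ∧ p u v ≤ 1) →
      (∀ u v, u ≠ v → P {ω | X s(u, v) ω = true} = ENNReal.ofReal (p u v)) →
      (∀ Vs : Finset (Fin n), (n : ℝ) ^ α * (Real.log n) ^ 3 ≤ (Vs.card : ℝ) →
        C₁ / (n : ℝ) ^ βlow ≤
          (∑ u ∈ Vs, ∑ v ∈ Vs, p u v) / (2 * (Vs.card.choose 2 : ℝ))) →
      1 - ENNReal.ofReal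
          (Real.exp (-D₂ * (n : ℝ) ^ (2 * α - βlow) * (Real.log n) ^ 6)) ≤
        P {ω | ENNReal.ofReal ((n : ℝ) ^ (1 - α) / (Real.log n) ^ 3) ≤
          ((SimpleGraph.fromRel (fun u v => X s(u, v) ω = true)).chromaticNumber :
            ℝ≥0∞)} := by
  obtain ⟨N, hN⟩ := eventually_atTop.1 <|
    ((tendsto_rpow_mul_log_pow_atTop (hβ0.trans hβα) three_ne_zero).eventually_ge_atTop 1).and
      (((tendsto_rpow_mul_log_pow_atTop (sub_nonneg.2 hβα) two_ne_zero).const_mul_atTop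
        hC₁).eventually_ge_atTop 16)
  refine ⟨C₁ / 8, by positivity, N, fun n hn Ω _ P _ X p hX hind hsym hdiag _ hp havg => ?_⟩
  obtain ⟨ht, h16⟩ := hN n hn
  set L := log n
  set t := (n : ℝ) ^ α * L ^ 3
  set m := ⌊t⌋₊ + 1
  have hn : (0 : ℝ) < n :=
    Nat.cast_pos.2 <| Nat.pos_of_ne_zero <| by rintro rfl; norm_num [t, L] at ht
  have htm : t < m := by exact_mod_cast Nat.lt_floor_add_one t
  have hm : 0 < (m.choose 2 : ℝ) :=
    Nat.cast_pos.2 (Nat.choose_pos (by exact_mod_cast ht.trans_lt htm))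
  have hbad := measure_exists_isNIndepSet_fromRel_le hX hind p hsym hdiag hp m (C₁ / n ^ βlow)
    fun s hs => by
      have := havg s (hs ▸ htm.le)
      rwa [hs, le_div_iff₀ (by positivity), mul_comm] at this
  have hexp := choose_mul_exp_neg_le (n := n) (a := C₁ / n ^ βlow) ht <| by
    rw [show C₁ / n ^ βlow * t = C₁ * (n ^ (α - βlow) * L ^ 2) * L by rw [rpow_sub hn]; ring]
    nlinarith [log_natCast_nonneg n]
  rw [Fintype.card_fin] at hbad
  rw [show -(C₁ / 8) * (n : ℝ) ^ (2 * α - βlow) * L ^ 6 = -(C₁ / n ^ βlow * t ^ 2 / 8) by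
    rw [two_mul, rpow_sub hn, rpow_add hn]; ring]
  refine one_sub_le_measure_of_measure_compl_le <|
    (measure_mono fun ω hω => ?_).trans (hbad.trans (ENNReal.ofReal_le_ofReal hexp))
  refine SimpleGraph.exists_isNIndepSet_of_chromaticNumber_lt (by positivity) ?_
  rw [Set.mem_compl_iff, Set.mem_ofPred, not_le, rpow_sub hn, rpow_one, div_div] at hω
  rwa [Fintype.card_fin]
end
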